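/- (Implication (C3∃) ⇒ (C2∃) of orbit propagation.) Let X be an infinite irreducible T1 topological space, f : X → X any map, and S ⊆ X. Let X_f^dense = {P ∈ X : O_f(P) is dense in X}. Suppose there exists a subset Q ⊆ S ∩ X_f^dense that is dense in X and is a complete set of representatives for grand-orbit equivalence on S ∩ X_f^dense. Then there exists a subset of S that is dense in X and is a complete set of representatives for grand-orbit equivalence on S. -/
import Mathlib


/-- The forward orbit of `P` under `f`: all iterates `f^[n] P` for `n ≥ 0`. -/
def fwdOrbit {X : Type*} (f : X → X) (P : X) : Set X := Set.range fun n => f^[n] P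

/-- Grand-orbit equivalence: `P ≡_f Q` iff the forward orbits of `P` and `Q` meet. -/
def goEquiv {X : Type*} (f : X → X) (P Q : X) : Prop :=
  (fwdOrbit f P ∩ fwdOrbit f Q).Nonempty

/-- `Q` is a complete set of representatives for grand-orbit equivalence on `S`:
`Q ⊆ S` and every point of `S` is grand-orbit equivalent to exactly one point of `Q`. -/
def IsCompleteReps {X : Type*} (f : X → X) (S Q : Set X) : Prop :=
  Q ⊆ S ∧ ∀ s ∈ S, ∃! q, q ∈ Q ∧ goEquiv f s q

/-- The set of points with dense forward `f`-orbit. -/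
def denseOrbitSet {X : Type*} [TopologicalSpace X] (f : X → X) : Set X :=
  {P | Dense (fwdOrbit f P)}

lemma goEquiv_refl {X : Type*} (f : X → X) (P : X) : goEquiv f P P :=
  ⟨P, ⟨0, rfl⟩, ⟨0, rfl⟩⟩

lemma goEquiv_symm {X : Type*} {f : X → X} {P Q : X} (h : goEquiv f P Q) : goEquiv f Q P := by
  obtain ⟨x, hx1, hx2⟩ := h
  exact ⟨x, hx2, hx1⟩

lemma goEquiv_trans {X : Type*} {f : X → X} {P Q R : X} (h1 : goEquiv f P Q)
    (h2 : goEquiv f Q R) : goEquiv f P R := by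
  obtain ⟨x, ⟨a, ha⟩, ⟨b, hb⟩⟩ := h1
  obtain ⟨y, ⟨c, hc⟩, ⟨d, hd⟩⟩ := h2
  simp only at ha hb hc hd
  refine ⟨f^[c] x, ⟨c + a, ?_⟩, ⟨b + d, ?_⟩⟩
  · simp only [Function.iterate_add_apply, ha]
  · show f^[b + d] R = f^[c] x
    rw [Function.iterate_add_apply, hd, ← hc, ← Function.iterate_add_apply,
      Nat.add_comm, Function.iterate_add_apply, hb]

/-- (C3∃) ⇒ (C2∃): on an infinite irreducible T1 space, if `S ∩ X_f^dense` has a dense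
complete set of representatives for grand-orbit equivalence, then so does `S`. -/
theorem C3exists_implies_C2exists {X : Type*} [TopologicalSpace X] [T1Space X]
    [IrreducibleSpace X] [Infinite X] (f : X → X) (S : Set X)
    (hC3 : ∃ Q : Set X, Dense Q ∧ IsCompleteReps f (S ∩ denseOrbitSet f) Q) :
    ∃ Q : Set X, Dense Q ∧ IsCompleteReps f S Q := by
  obtain ⟨Q, hQd, hQsub, hQrep⟩ := hC3
  -- T : points of S not equivalent to any point of Q
  set T : Set X := {s ∈ S | ¬ ∃ q ∈ Q, goEquiv f s q} with hT
  -- setoid on T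
  let st : Setoid T := ⟨fun a b => goEquiv f a.1 b.1,
    ⟨fun a => goEquiv_refl f a.1, fun h => goEquiv_symm h, fun h1 h2 => goEquiv_trans h1 h2⟩⟩
  let rep : T → T := fun t => (Quotient.mk st t).out
  have hrep_equiv : ∀ t : T, goEquiv f (rep t).1 t.1 := fun t =>
    Quotient.mk_out (s := st) t
  have hrep_eq : ∀ t t' : T, goEquiv f t.1 t'.1 → rep t = rep t' := by
    intro t t' h
    simp only [rep]
    congr 1
    exact Quotient.sound (s := st) h
  let R : Set X := Set.range fun t : T => (rep t).1
  refine ⟨Q ∪ R, hQd.mono Set.subset_union_left, ?_, ?_⟩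
  · rintro x (hx | ⟨t, rfl⟩)
    · exact (hQsub hx).1
    · exact (rep t).2.1
  · intro s hs
    by_cases hcase : ∃ q ∈ Q, goEquiv f s q
    · obtain ⟨q, hq, hsq⟩ := hcase
      refine ⟨q, ⟨Or.inl hq, hsq⟩, ?_⟩
      rintro q' ⟨(hq' | ⟨t, rfl⟩), hsq'⟩
      · -- both q, q' in Q, use uniqueness at q ∈ S ∩ D
        obtain ⟨w, -, hw⟩ := hQrep q (hQsub hq)
        exact (hw q' ⟨hq', goEquiv_trans (goEquiv_symm hsq) hsq'⟩).trans
          (hw q ⟨hq, goEquiv_refl f q⟩).symm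
      · exact absurd ⟨q, hq, goEquiv_trans (goEquiv_symm hsq') hsq⟩ (rep t).2.2
    · have hsT : s ∈ T := ⟨hs, hcase⟩
      refine ⟨(rep ⟨s, hsT⟩).1, ⟨Or.inr ⟨⟨s, hsT⟩, rfl⟩,
        goEquiv_symm (hrep_equiv ⟨s, hsT⟩)⟩, ?_⟩
      rintro q' ⟨(hq' | ⟨t, rfl⟩), hsq'⟩
      · exact absurd ⟨q', hq', hsq'⟩ hcase
      · have h : goEquiv f (⟨s, hsT⟩ : T).1 t.1 :=
          goEquiv_trans hsq' (hrep_equiv t)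
        exact congrArg Subtype.val (hrep_eq t ⟨s, hsT⟩ (goEquiv_symm h))
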